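/- Tensoring with a fixed object does not increase degree: let C be a category with endofunctor s and natural transformation ι : id_C → s, let (A, ⊗) be an abelian monoidal category with ⊗ exact in each variable, let T : C → A be a functor and A₀ ∈ A an object. Then deg(T ⊗ A₀) ≤ deg(T), where (T ⊗ A₀)(c) = T(c) ⊗ A₀ and degree is the recursive notion: deg = −1 iff the functor is zero, and deg ≤ d+1 iff Tι is split injective with coker(Tι) of degree ≤ d. -/

import Mathlib

open CategoryTheory Limits

universe v u v' u'

/-- The natural transformation `Tι : T ⟶ Ts` (componentwise `T(ι_c) : T(c) → T(s(c))`)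
induced by `ι : 𝟭 C ⟶ s`. -/
def stabNat {C : Type u} [Category.{v} C] {A : Type u'} [Category.{v'} A]
    (s : C ⥤ C) (ι : 𝟭 C ⟶ s) (T : C ⥤ A) : T ⟶ s ⋙ T where
  app c := T.map (ι.app c)
  naturality c c' f := by
    dsimp
    rw [← T.map_comp, ← T.map_comp]
    exact congrArg T.map (ι.naturality f)

/-- `DegLE s ι d T` : the functor `T : C → A` has degree at most `d` (for
`d ∈ {-1} ∪ ℕ`), defined recursively: the only functor of degree `-1` is the zero
functor, and `T` has degree at most `d+1` iff `Tι : T ⟶ Ts` is split injective in the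
functor category and the cokernel `ΔT = coker(Tι)` has degree at most `d`. -/
inductive DegLE {C : Type u} [Category.{v} C] {A : Type u'} [Category.{v'} A] [Abelian A]
    (s : C ⥤ C) (ι : 𝟭 C ⟶ s) : ℤ → (C ⥤ A) → Prop
  | neg_one (T : C ⥤ A) (h : ∀ c : C, IsZero (T.obj c)) : DegLE s ι (-1) T
  | step (d : ℤ) (T : C ⥤ A) (r : s ⋙ T ⟶ T) (hr : stabNat s ι T ≫ r = 𝟙 T)
      (h : DegLE s ι d (cokernel (stabNat s ι T))) : DegLE s ι (d + 1) T

/-!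
A right exact functor `F` commutes with the construction `T ↦ (Tι, ΔT)`: `(T ⋙ F)ι` is `Tι`
whiskered by `F`, so it is split injective whenever `Tι` is, and `Δ(T ⋙ F) ≅ ΔT ⋙ F` because
`F`, hence whiskering by `F`, preserves cokernels. Induction on the degree then shows that
composing with `F` does not increase degree; `- ⊗ A₀` is such a functor.
-/

section

variable {C : Type u} [Category.{v} C] {A : Type u'} [Category.{v'} A] (s : C ⥤ C) (ι : 𝟭 C ⟶ s)

lemma stabNat_naturality {T T' : C ⥤ A} (α : T ⟶ T') :
    stabNat s ι T ≫ Functor.whiskerLeft s α = α ≫ stabNat s ι T' := by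
  ext c
  exact α.naturality (ι.app c)

lemma stabNat_comp {B : Type*} [Category B] (T : C ⥤ A) (F : A ⥤ B) :
    stabNat s ι (T ⋙ F) = Functor.whiskerRight (stabNat s ι T) F :=
  rfl

variable [Abelian A]

lemma DegLE.of_iso {d : ℤ} {T T' : C ⥤ A} (h : DegLE s ι d T) (e : T ≅ T') :
    DegLE s ι d T' := by
  induction h generalizing T' with
  | neg_one T hT => exact .neg_one T' fun c => (hT c).of_iso (e.app c).symm
  | step d T r hr _ ih =>
    refine .step d T' (Functor.whiskerLeft s e.inv ≫ r ≫ e.hom) ?_ ?_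
    · rw [← Category.assoc, stabNat_naturality, Category.assoc, reassoc_of% hr, e.inv_hom_id]
    · exact ih (cokernel.mapIso _ _ e (Functor.isoWhiskerLeft s e) (stabNat_naturality s ι e.hom))

lemma DegLE.comp {B : Type*} [Category B] [Abelian B] (F : A ⥤ B) [PreservesFiniteColimits F]
    {d : ℤ} {T : C ⥤ A} (h : DegLE s ι d T) : DegLE s ι d (T ⋙ F) := by
  induction h with
  | neg_one T hT => exact .neg_one _ fun c => F.map_isZero (hT c)
  | step d T r hr _ ih =>
    refine .step d (T ⋙ F) (Functor.whiskerRight r F) ?_ ?_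
    · rw [stabNat_comp, ← Functor.whiskerRight_comp, hr, Functor.whiskerRight_id']
    · rw [stabNat_comp]
      exact ih.of_iso s ι
        (PreservesCokernel.iso ((Functor.whiskeringRight C A B).obj F) (stabNat s ι T))

end

/-- Tensoring with a fixed object does not increase degree: if `(A, ⊗)` is an abelian
monoidal category with `⊗` exact in each variable, `T : C → A` a functor and `A₀ ∈ A`
an object, then `deg(T ⊗ A₀) ≤ deg(T)`, where `(T ⊗ A₀)(c) = T(c) ⊗ A₀`. -/
theorem degree_tensor_const {C : Type u} [Category.{v} C] {A : Type u'}
    [Category.{v'} A] [Abelian A] [MonoidalCategory A]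
    [∀ X : A, PreservesFiniteLimits (MonoidalCategory.tensorLeft X)]
    [∀ X : A, PreservesFiniteColimits (MonoidalCategory.tensorLeft X)]
    [∀ X : A, PreservesFiniteLimits (MonoidalCategory.tensorRight X)]
    [∀ X : A, PreservesFiniteColimits (MonoidalCategory.tensorRight X)]
    (s : C ⥤ C) (ι : 𝟭 C ⟶ s) (T : C ⥤ A) (A₀ : A) (d : ℤ)
    (h : DegLE s ι d T) :
    DegLE s ι d (T ⋙ MonoidalCategory.tensorRight A₀) :=
  h.comp s ι _
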